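/- Let f*_M be an optimal solution of MCFF(q+n) on F(Ā,B̄,c) with optimal cost c*. Then I_{f*_M} is an optimal solution of the minimum cost constrained input selection problem, i.e., (Ā, B̄_{I_{f*_M}}) is structurally controllable and for every W ⊆ {1,…,m} with (Ā,B̄_W) structurally controllable, p(I_{f*_M}) ≤ p(W). Consequently the optimal costs coincide: p* = c*. -/

import Mathlib

/-!
A feasible flow of value `q + n` saturates every source edge. The unit leaving each `N i`
reaches some `u'_j` with an edge from `N i`, and the units leaving the `x'_k` form a fractional
matching of `B(Ā,B̄)`, so Hall's theorem yields a matching saturating `x'₁,…,x'ₙ`; every input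
used carries positive flow into `t`, hence `(Ā, B̄_{I_f})` is structurally controllable.
Conversely, if `(Ā, B̄_W)` is structurally controllable, a choice of covering inputs for the
`N i` together with such a matching defines an integral flow of value `q + n` supported on `W`
(`q ≤ n` keeps the load of each edge `(u'_j, t)` within its capacity `n + 1`). Its fixed cost is
at most `p(W)`, so optimality of `f` gives `p(I_f) = c_f ≤ p(W)`.
-/

open scoped Classical

/-- Vertices of the flow network `F(Ā,B̄)` of Algorithm 1: source `s`, sink `t`,
one vertex `N i` per non-top-linked SCC, right copies `xp k` of states, states
`x r`, inputs `u j`, and input copies `up j`. -/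
inductive FV (n m q : ℕ) : Type
  | s : FV n m q
  | t : FV n m q
  | N : Fin q → FV n m q
  | xp : Fin n → FV n m q
  | x : Fin n → FV n m q
  | u : Fin m → FV n m q
  | up : Fin m → FV n m q
  deriving DecidableEq, Fintype

variable {n m q : ℕ}

/-- Capacities of the flow network `F(Ā,B̄)`: all edges have capacity `1`,
except the edges `(u'_j, t)` which have capacity `n+1`; non-edges have
capacity `0`. `memN i r` says state `x_r` belongs to the non-top-linked SCC
`N_i`. -/
noncomputable def cap (A : Fin n → Fin n → Bool) (B : Fin n → Fin m → Bool)
    (memN : Fin q → Fin n → Bool) : FV n m q → FV n m q → ℕ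
  | FV.s, FV.N _ => 1
  | FV.s, FV.xp _ => 1
  | FV.N i, FV.up j => if ∃ r : Fin n, memN i r = true ∧ B r j = true then 1 else 0
  | FV.xp k, FV.x r => if A k r = true then 1 else 0
  | FV.xp k, FV.u j => if B k j = true then 1 else 0
  | FV.u j, FV.up j' => if j = j' then 1 else 0
  | FV.up _, FV.t => n + 1
  | FV.x _, FV.t => 1
  | _, _ => 0

/-- A feasible flow vector on `F(Ā,B̄)`: nonnegative, capacity-respecting, and
conserving flow at every vertex other than `s` and `t`. -/
def Feasible (b : FV n m q → FV n m q → ℕ) (f : FV n m q → FV n m q → ℝ) : Prop :=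
  (∀ a c, 0 ≤ f a c) ∧ (∀ a c, f a c ≤ (b a c : ℝ)) ∧
    ∀ v : FV n m q, v ≠ FV.s → v ≠ FV.t → ∑ a, f a v = ∑ c, f v c

/-- Value of a flow: total flow out of the source. -/
noncomputable def value (f : FV n m q → FV n m q → ℝ) : ℝ := ∑ v, f FV.s v

/-- Edge relation of the system bipartite graph `B(Ā,B̄)`. -/
def bipE (A : Fin n → Fin n → Bool) (B : Fin n → Fin m → Bool) :
    Fin n ⊕ Fin m → Fin n → Prop
  | Sum.inl r, k => A k r = true
  | Sum.inr j, k => B k j = true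

/-- Structural controllability of `(Ā,B̄)` (characterization used throughout the
paper): every non-top-linked SCC `N_i` receives an edge from some input, and
`B(Ā,B̄)` has a matching saturating the right vertices `x'₁,…,x'ₙ`. -/
def SCchar (A : Fin n → Fin n → Bool) (B : Fin n → Fin m → Bool)
    (memN : Fin q → Fin n → Bool) : Prop :=
  (∀ i : Fin q, ∃ j : Fin m, ∃ r : Fin n, memN i r = true ∧ B r j = true) ∧
    ∃ M : Fin n → Fin n ⊕ Fin m, Function.Injective M ∧ ∀ k : Fin n, bipE A B (M k) k

/-- Edge costs on `F(Ā,B̄,c)`: the edge `(u'_j, t)` has cost `p j`, all other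
edges have cost `0`. -/
def cost (p : Fin m → ℝ) : FV n m q → FV n m q → ℝ
  | FV.up j, FV.t => p j
  | _, _ => 0

/-- Fixed-flow cost of a flow `f`: the sum of the costs of the edges carrying
positive flow, `c_f = Σ_{e : f(e) > 0} c(e)`. -/
noncomputable def fixedCost (p : Fin m → ℝ) (f : FV n m q → FV n m q → ℝ) : ℝ :=
  ∑ a : FV n m q, ∑ c : FV n m q, if 0 < f a c then cost p a c else 0

namespace FV

def equivSum (n m q : ℕ) : Unit ⊕ Unit ⊕ Fin q ⊕ Fin n ⊕ Fin n ⊕ Fin m ⊕ Fin m ≃ FV n m q where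
  toFun
    | .inl _ => s
    | .inr (.inl _) => t
    | .inr (.inr (.inl i)) => N i
    | .inr (.inr (.inr (.inl k))) => xp k
    | .inr (.inr (.inr (.inr (.inl r)))) => x r
    | .inr (.inr (.inr (.inr (.inr (.inl j))))) => u j
    | .inr (.inr (.inr (.inr (.inr (.inr j))))) => up j
  invFun
    | s => .inl ()
    | t => .inr (.inl ())
    | N i => .inr (.inr (.inl i))
    | xp k => .inr (.inr (.inr (.inl k)))
    | x r => .inr (.inr (.inr (.inr (.inl r))))
    | u j => .inr (.inr (.inr (.inr (.inr (.inl j)))))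
    | up j => .inr (.inr (.inr (.inr (.inr (.inr j)))))
  left_inv := by rintro (_ | _ | _ | _ | _ | _ | _) <;> rfl
  right_inv := by rintro (_ | _ | _ | _ | _ | _ | _) <;> rfl

theorem sum_eq {β : Type*} [AddCommMonoid β] (g : FV n m q → β) :
    ∑ v, g v = g s + g t + (∑ i, g (N i) + (∑ k, g (xp k) + (∑ r, g (x r) +
      (∑ j, g (u j) + ∑ j, g (up j))))) := by
  rw [← (equivSum n m q).sum_comp g]
  simp [Fintype.sum_sum_type, equivSum, add_assoc]

end FV

open FV

theorem fixedCost_eq_sum_ite (p : Fin m → ℝ) (f : FV n m q → FV n m q → ℝ) :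
    fixedCost p f = ∑ j, if 0 < f (up j) t then p j else 0 := by
  simp [fixedCost, FV.sum_eq, cost]

theorem exists_injective_of_fractional_matching {α β : Type*} [Fintype α] [Fintype β]
    [DecidableEq β] (w : α → β → ℝ) (hw : ∀ a b, 0 ≤ w a b) (hrow : ∀ a, 1 ≤ ∑ b, w a b)
    (hcol : ∀ b, ∑ a, w a b ≤ 1) : ∃ M : α → β, Function.Injective M ∧ ∀ a, 0 < w a (M a) := by
  let support : α → Finset β := fun a => Finset.univ.filter fun b => 0 < w a b
  suffices hall : ∀ S : Finset α, S.card ≤ (S.biUnion support).card by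
    obtain ⟨M, hM, hMs⟩ := (Finset.all_card_le_biUnion_card_iff_exists_injective support).1 hall
    exact ⟨M, hM, fun a => (Finset.mem_filter.1 (hMs a)).2⟩
  intro S
  have hzero : ∀ a ∈ S, ∀ b ∉ S.biUnion support, w a b = 0 := fun a ha b hb =>
    ((hw a b).eq_or_lt.resolve_right fun hpos =>
      hb (Finset.mem_biUnion.2 ⟨a, ha, Finset.mem_filter.2 ⟨Finset.mem_univ b, hpos⟩⟩)).symm
  have : (S.card : ℝ) ≤ (S.biUnion support).card :=
    calc (S.card : ℝ) = ∑ _a ∈ S, (1 : ℝ) := by simp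
      _ ≤ ∑ a ∈ S, ∑ b, w a b := Finset.sum_le_sum fun a _ => hrow a
      _ = ∑ a ∈ S, ∑ b ∈ S.biUnion support, w a b := Finset.sum_congr rfl fun a ha =>
          (Finset.sum_subset (Finset.subset_univ _) fun b _ hb => hzero a ha b hb).symm
      _ = ∑ b ∈ S.biUnion support, ∑ a ∈ S, w a b := Finset.sum_comm
      _ ≤ ∑ b ∈ S.biUnion support, ∑ a, w a b := Finset.sum_le_sum fun b _ =>
          Finset.sum_le_sum_of_subset_of_nonneg (Finset.subset_univ S) fun a _ _ => hw a b
      _ ≤ ∑ _b ∈ S.biUnion support, (1 : ℝ) := Finset.sum_le_sum fun b _ => hcol b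
      _ = (S.biUnion support).card := by simp
  exact_mod_cast this

namespace Feasible

variable {A : Fin n → Fin n → Bool} {B : Fin n → Fin m → Bool} {memN : Fin q → Fin n → Bool}
  {f : FV n m q → FV n m q → ℝ}

theorem eq_zero_of_cap_eq_zero (hf : Feasible (cap A B memN) f) {a c : FV n m q}
    (h : cap A B memN a c = 0) : f a c = 0 :=
  le_antisymm (by simpa [h] using hf.2.1 a c) (hf.1 a c)

theorem cap_ne_zero_of_pos (hf : Feasible (cap A B memN) f) {a c : FV n m q}
    (h : 0 < f a c) : cap A B memN a c ≠ 0 :=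
  fun h0 => h.ne' (hf.eq_zero_of_cap_eq_zero h0)

theorem u_up_eq_zero (hf : Feasible (cap A B memN) f) {j j' : Fin m} (h : j ≠ j') :
    f (u j) (up j') = 0 :=
  hf.eq_zero_of_cap_eq_zero (by simp [cap, h])

theorem value_eq (hf : Feasible (cap A B memN) f) :
    value f = ∑ i, f s (N i) + ∑ k, f s (xp k) := by
  simp [value, FV.sum_eq, hf.eq_zero_of_cap_eq_zero, cap.eq_def]

theorem conservation_N (hf : Feasible (cap A B memN) f) (i : Fin q) :
    f s (N i) = ∑ j, f (N i) (up j) := by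
  simpa [FV.sum_eq, hf.eq_zero_of_cap_eq_zero, cap.eq_def] using hf.2.2 (N i) (by simp) (by simp)

theorem conservation_xp (hf : Feasible (cap A B memN) f) (k : Fin n) :
    f s (xp k) = ∑ r, f (xp k) (x r) + ∑ j, f (xp k) (u j) := by
  simpa [FV.sum_eq, hf.eq_zero_of_cap_eq_zero, cap.eq_def] using hf.2.2 (xp k) (by simp) (by simp)

theorem conservation_x (hf : Feasible (cap A B memN) f) (r : Fin n) :
    ∑ k, f (xp k) (x r) = f (x r) t := by
  simpa [FV.sum_eq, hf.eq_zero_of_cap_eq_zero, cap.eq_def] using hf.2.2 (x r) (by simp) (by simp)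

theorem conservation_u (hf : Feasible (cap A B memN) f) (j : Fin m) :
    ∑ k, f (xp k) (u j) = f (u j) (up j) := by
  have h := hf.2.2 (u j) (by simp) (by simp)
  simp only [FV.sum_eq, hf.eq_zero_of_cap_eq_zero, cap.eq_def] at h
  simpa [Fintype.sum_eq_single j fun j' hj' => hf.u_up_eq_zero (Ne.symm hj')] using h

theorem conservation_up (hf : Feasible (cap A B memN) f) (j : Fin m) :
    ∑ i, f (N i) (up j) + f (u j) (up j) = f (up j) t := by
  have h := hf.2.2 (up j) (by simp) (by simp)
  simp only [FV.sum_eq, hf.eq_zero_of_cap_eq_zero, cap.eq_def] at h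
  simpa [Fintype.sum_eq_single j fun j' hj' => hf.u_up_eq_zero hj'] using h

theorem source_saturated (hf : Feasible (cap A B memN) f)
    (hval : (q : ℝ) + n ≤ value f) : (∀ i, f s (N i) = 1) ∧ ∀ k, f s (xp k) = 1 := by
  have hN : ∀ i, f s (N i) ≤ 1 := fun i => by simpa [cap] using hf.2.1 s (N i)
  have hxp : ∀ k, f s (xp k) ≤ 1 := fun k => by simpa [cap] using hf.2.1 s (xp k)
  have hsumN : ∑ i, f s (N i) ≤ ∑ _i : Fin q, (1 : ℝ) := Finset.sum_le_sum fun i _ => hN i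
  have hsumxp : ∑ k, f s (xp k) ≤ ∑ _k : Fin n, (1 : ℝ) := Finset.sum_le_sum fun k _ => hxp k
  have hcard : ∑ _i : Fin q, (1 : ℝ) + ∑ _k : Fin n, (1 : ℝ) ≤
      ∑ i, f s (N i) + ∑ k, f s (xp k) := by
    simpa [hf.value_eq] using hval
  exact ⟨fun i => (Finset.sum_eq_sum_iff_of_le fun i _ => hN i).1 (by linarith) i
      (Finset.mem_univ i),
    fun k => (Finset.sum_eq_sum_iff_of_le fun k _ => hxp k).1 (by linarith) k
      (Finset.mem_univ k)⟩

theorem sink_pos_of_N_pos (hf : Feasible (cap A B memN) f) {i : Fin q} {j : Fin m}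
    (h : 0 < f (N i) (up j)) : 0 < f (up j) t := by
  rw [← hf.conservation_up j]
  have := Finset.single_le_sum (fun i' _ => hf.1 (N i') (up j)) (Finset.mem_univ i)
  linarith [hf.1 (u j) (up j)]

theorem sink_pos_of_xp_pos (hf : Feasible (cap A B memN) f) {k : Fin n} {j : Fin m}
    (h : 0 < f (xp k) (u j)) : 0 < f (up j) t := by
  rw [← hf.conservation_up j, ← hf.conservation_u j]
  have := Finset.single_le_sum (fun k' _ => hf.1 (xp k') (u j)) (Finset.mem_univ k)
  linarith [Finset.sum_nonneg fun i (_ : i ∈ Finset.univ) => hf.1 (N i) (up j)]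

theorem covers_of_value_ge (hf : Feasible (cap A B memN) f)
    (hval : (q : ℝ) + n ≤ value f) (i : Fin q) :
    ∃ j r, memN i r = true ∧ (B r j && decide (0 < f (up j) t)) = true := by
  have hout : 0 < ∑ j, f (N i) (up j) := by
    rw [← hf.conservation_N i, (hf.source_saturated hval).1 i]
    exact one_pos
  obtain ⟨j, -, hj⟩ := Finset.exists_lt_of_sum_lt (f := fun _ => (0 : ℝ))
    (g := fun j => f (N i) (up j)) (by simpa using hout)
  obtain ⟨r, hr, hB⟩ : ∃ r, memN i r = true ∧ B r j = true := by
    simpa [cap] using hf.cap_ne_zero_of_pos hj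
  exact ⟨j, r, hr, by simp [hB, hf.sink_pos_of_N_pos hj]⟩

theorem exists_matching_of_value_ge (hf : Feasible (cap A B memN) f)
    (hval : (q : ℝ) + n ≤ value f) :
    ∃ M : Fin n → Fin n ⊕ Fin m, Function.Injective M ∧
      ∀ k, bipE A (fun r j => B r j && decide (0 < f (up j) t)) (M k) k := by
  obtain ⟨M, hM, hpos⟩ := exists_injective_of_fractional_matching
    (fun k v => f (xp k) (Sum.elim x u v)) (fun _ _ => hf.1 _ _)
    (fun k => by simp [Fintype.sum_sum_type, ← hf.conservation_xp, (hf.source_saturated hval).2])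
    (by
      rintro (r | j)
      · simpa [hf.conservation_x, cap] using hf.2.1 (x r) t
      · simpa [hf.conservation_u, cap] using hf.2.1 (u j) (up j))
  refine ⟨M, hM, fun k => ?_⟩
  have hk := hpos k
  rcases hMk : M k with r | j <;> simp only [hMk, Sum.elim_inl, Sum.elim_inr] at hk
  · simpa [bipE, cap] using hf.cap_ne_zero_of_pos hk
  · have hB : B k j = true := by simpa [cap] using hf.cap_ne_zero_of_pos hk
    simp [bipE, hB, hf.sink_pos_of_xp_pos hk]

end Feasible

section FlowOfCover

variable {A : Fin n → Fin n → Bool} {B : Fin n → Fin m → Bool} {memN : Fin q → Fin n → Bool}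
  {ji : Fin q → Fin m} {M : Fin n → Fin n ⊕ Fin m}

theorem sum_ite_eq_le_one_of_injective {α β : Type*} [Fintype α] [DecidableEq β] {g : α → β}
    (hg : Function.Injective g) (b : β) : ∑ a, (if g a = b then (1 : ℝ) else 0) ≤ 1 := by
  rw [Finset.sum_boole]
  exact_mod_cast Finset.card_le_one.2 fun a ha a' ha' => hg <| by
    rw [(Finset.mem_filter.1 ha).2, (Finset.mem_filter.1 ha').2]

noncomputable def flowOfCover (ji : Fin q → Fin m) (M : Fin n → Fin n ⊕ Fin m) :
    FV n m q → FV n m q → ℝ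
  | .s, .N _ => 1
  | .s, .xp _ => 1
  | .N i, .up j => if ji i = j then 1 else 0
  | .xp k, .x r => if M k = .inl r then 1 else 0
  | .xp k, .u j => if M k = .inr j then 1 else 0
  | .x r, .t => ∑ k, if M k = .inl r then 1 else 0
  | .u j, .up j' => if j = j' then ∑ k, if M k = .inr j then 1 else 0 else 0
  | .up j, .t => ∑ i, (if ji i = j then 1 else 0) + ∑ k, if M k = .inr j then 1 else 0
  | _, _ => 0

theorem flowOfCover_feasible (hq : q ≤ n) (hji : ∀ i, ∃ r, memN i r = true ∧ B r (ji i) = true)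
    (hM : Function.Injective M) (hMA : ∀ k, bipE A B (M k) k) :
    Feasible (cap A B memN) (flowOfCover ji M) := by
  refine ⟨fun a c => ?_, fun a c => ?_, fun v hs ht => ?_⟩
  · cases a <;> cases c <;> simp only [flowOfCover] <;> positivity
  · cases a <;> cases c <;> simp only [flowOfCover, cap, le_refl, Nat.cast_zero, Nat.cast_one]
    case N.up i j =>
      split_ifs with h h' <;> first | exact absurd (h ▸ hji i) h' | norm_num
    case xp.x k r =>
      split_ifs with h h' <;> first | exact absurd (by simpa [h, bipE] using hMA k) h' | norm_num
    case xp.u k j =>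
      split_ifs with h h' <;> first | exact absurd (by simpa [h, bipE] using hMA k) h' | norm_num
    case x.t r => exact sum_ite_eq_le_one_of_injective hM _
    case u.up j j' =>
      split_ifs
      · exact_mod_cast sum_ite_eq_le_one_of_injective hM _
      · norm_num
    case up.t j =>
      have hcover : ∑ i, (if ji i = j then (1 : ℝ) else 0) ≤ n := by
        rw [Finset.sum_boole]
        exact_mod_cast (Finset.card_filter_le _ _).trans (by simpa using hq)
      push_cast
      linarith [sum_ite_eq_le_one_of_injective hM (Sum.inr j)]
  · cases v
    case xp k => rcases hMk : M k with r | j <;> simp [FV.sum_eq, flowOfCover, hMk]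
    all_goals simp_all [FV.sum_eq, flowOfCover]

theorem value_flowOfCover : value (flowOfCover ji M : FV n m q → FV n m q → ℝ) = q + n := by
  simp [value, FV.sum_eq, flowOfCover]

theorem exists_of_flowOfCover_pos {j : Fin m} (h : 0 < flowOfCover ji M (up j) t) :
    (∃ i, ji i = j) ∨ ∃ k, M k = .inr j := by
  contrapose! h
  simp [flowOfCover, h]

end FlowOfCover

theorem exists_flow_of_SCchar {A : Fin n → Fin n → Bool} {B : Fin n → Fin m → Bool}
    {memN : Fin q → Fin n → Bool} {W : Finset (Fin m)} (hq : q ≤ n)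
    (hW : SCchar A (fun r j => B r j && decide (j ∈ W)) memN) :
    ∃ g, Feasible (cap A B memN) g ∧ value g = q + n ∧ ∀ j, 0 < g (up j) t → j ∈ W := by
  obtain ⟨hcover, M, hM, hMW⟩ := hW
  choose ji r hr hBW using hcover
  simp only [Bool.and_eq_true, decide_eq_true_eq] at hBW
  have hMB : ∀ k, bipE A B (M k) k ∧ ∀ j, M k = .inr j → j ∈ W := fun k => by
    have hk := hMW k
    rcases hMk : M k with r' | j <;> rw [hMk] at hk <;> simpa [bipE] using hk
  refine ⟨flowOfCover ji M, flowOfCover_feasible hq (fun i => ⟨r i, hr i, (hBW i).1⟩) hM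
    (fun k => (hMB k).1), value_flowOfCover, fun j hj => ?_⟩
  rcases exists_of_flowOfCover_pos hj with ⟨i, rfl⟩ | ⟨k, hk⟩
  · exact (hBW i).2
  · exact (hMB k).2 j hk

theorem fixedCost_le_sum_of_support_subset {p : Fin m → ℝ} (hp : ∀ j, 0 ≤ p j)
    {g : FV n m q → FV n m q → ℝ} {W : Finset (Fin m)} (hg : ∀ j, 0 < g (up j) t → j ∈ W) :
    fixedCost p g ≤ ∑ j ∈ W, p j := by
  rw [fixedCost_eq_sum_ite, ← Finset.sum_filter]
  exact Finset.sum_le_sum_of_subset_of_nonneg (fun j hj => hg j (Finset.mem_filter.1 hj).2)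
    fun j _ _ => hp j

/-- Theorem 2. Let `f` be an optimal solution of `MCFF(q+n)`
on `F(Ā,B̄,c)` (a feasible flow of value at least `q+n` with minimal fixed-flow
cost `c* = c_f`). Then `I_f = {j : f((u'_j,t)) > 0}` is an optimal solution of
the minimum cost constrained input selection problem: `(Ā, B̄_{I_f})` is
structurally controllable, and for every input set `W` with `(Ā,B̄_W)`
structurally controllable we have `p(I_f) ≤ p(W)`. Consequently the optimal
costs coincide: `p* = p(I_f) = c_f = c*`. -/
theorem stmt14 (A : Fin n → Fin n → Bool) (B : Fin n → Fin m → Bool)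
    (memN : Fin q → Fin n → Bool) (hq : q ≤ n)
    (p : Fin m → ℝ) (hp : ∀ j : Fin m, 0 ≤ p j)
    (f : FV n m q → FV n m q → ℝ) (hf : Feasible (cap A B memN) f)
    (hval : ((q : ℝ) + n) ≤ value f)
    (hopt : ∀ g : FV n m q → FV n m q → ℝ, Feasible (cap A B memN) g →
      ((q : ℝ) + n) ≤ value g → fixedCost p f ≤ fixedCost p g) :
    SCchar A (fun r j => B r j && decide (0 < f (FV.up j) FV.t)) memN ∧
      (∀ W : Finset (Fin m),
        SCchar A (fun r j => B r j && decide (j ∈ W)) memN →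
          ∑ j ∈ Finset.univ.filter (fun j : Fin m => 0 < f (FV.up j) FV.t), p j
            ≤ ∑ j ∈ W, p j) ∧
      ∑ j ∈ Finset.univ.filter (fun j : Fin m => 0 < f (FV.up j) FV.t), p j
        = fixedCost p f := by
  have hcost : ∑ j ∈ Finset.univ.filter (fun j : Fin m => 0 < f (up j) t), p j = fixedCost p f :=
    by rw [fixedCost_eq_sum_ite, Finset.sum_filter]
  refine ⟨⟨hf.covers_of_value_ge hval, hf.exists_matching_of_value_ge hval⟩, fun W hW => ?_, hcost⟩
  obtain ⟨g, hg, hgval, hgW⟩ := exists_flow_of_SCchar hq hW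
  calc _ = fixedCost p f := hcost
    _ ≤ fixedCost p g := hopt g hg hgval.ge
    _ ≤ ∑ j ∈ W, p j := fixedCost_le_sum_of_support_subset hp hgW
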